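/- arXiv:2412.16794 — 4 statements merged into one kernel-verified Lean document; each statement's English description precedes it below -/
import Mathlib

section
/- For real numbers b with 0 ≤ b < 1 and integer k ≥ 2, the sum ∑_{j=1}^{k} (1/2 / (1/2 + k - j))^{1/2} · j^{-b} is at most B(1/2, 1-b) · (k+1)^{1/2 - b}, where B denotes the Beta function. -/
/-!
Substituting `t = s / K` gives `B(1/2, 1-b) K^(1/2-b) = ∫₀^K s^(-1/2) (K-s)^(-b) ds`;
take `K = k+1`. Split `[0, K]` into `[0, 2]` and the unit intervals `[m+1, m+2]`, `1 ≤ m < k`.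
On `[m+1, m+2]` we have `s ≤ 2m+1` and `K - s ≤ k - m`, so the integrand dominates the summand
of index `j = k - m`, `φ_m (k-m)^(-b)`, pointwise. On `[0, 2]` the integral is at least
`2√2 K^(-b)`, which dominates the summand of index `j = k`, namely `k^(-b) ≤ (K/k) K^(-b)`.
-/
open Finset

noncomputable def realBeta (x y : ℝ) : ℝ :=
  ∫ t in (0:ℝ)..1, t ^ (x - 1) * (1 - t) ^ (y - 1)

open intervalIntegral MeasureTheory Set

-- `φ_m^u` in the paper's notation.
noncomputable def phi (u m : ℝ) : ℝ := (u / (u + m)) ^ u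

lemma phi_half_le_rpow_neg_half {m s : ℝ} (hs : 0 < s) (hsm : s ≤ 2 * m + 1) :
    phi (1 / 2) m ≤ s ^ (-(1 / 2) : ℝ) := by
  have hphi : phi (1 / 2) m = (2 * m + 1) ^ (-(1 / 2) : ℝ) := by
    rw [phi, Real.rpow_neg (by linarith), ← Real.inv_rpow (by linarith)]
    congr 1
    field_simp
    ring
  rw [hphi]
  exact Real.rpow_le_rpow_of_nonpos hs hsm (by norm_num)

lemma rpow_neg_le_div_mul_rpow_neg {x y b : ℝ} (hx : 0 < x) (hxy : x ≤ y) (hb1 : b ≤ 1) :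
    x ^ (-b) ≤ y / x * y ^ (-b) := by
  have hy : 0 < y := hx.trans_le hxy
  have hratio : x ^ (-b) = (y / x) ^ b * y ^ (-b) := by
    rw [Real.div_rpow hy.le hx.le, Real.rpow_neg hy.le, Real.rpow_neg hx.le]
    field_simp
  rw [hratio]
  gcongr
  calc (y / x) ^ b ≤ (y / x) ^ (1 : ℝ) :=
        Real.rpow_le_rpow_of_exponent_le ((one_le_div hx).mpr hxy) hb1
    _ = y / x := Real.rpow_one _

lemma sum_Icc_one_eq_sum_range_sub {M : Type*} [AddCommMonoid M] (f : ℕ → M) (k : ℕ) :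
    ∑ j ∈ Icc 1 k, f j = ∑ m ∈ range k, f (k - m) := by
  rw [← Nat.Ico_zero_eq_range, sum_Ico_reflect f 0 (Nat.le_succ k), Nat.add_sub_cancel_left,
    Nat.sub_zero, Finset.Ico_add_one_right_eq_Icc]

lemma realBeta_mul_rpow_eq_integral (x y : ℝ) {K : ℝ} (hK : 0 < K) :
    realBeta x y * K ^ (x + y - 1) = ∫ s in 0..K, s ^ (x - 1) * (K - s) ^ (y - 1) := by
  have hscale : EqOn (fun s ↦ s ^ (x - 1) * (K - s) ^ (y - 1))
      (fun s ↦ (s / K) ^ (x - 1) * (1 - s / K) ^ (y - 1) * K ^ (x + y - 2)) (uIcc 0 K) := by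
    intro s hs
    rw [uIcc_of_le hK.le] at hs
    dsimp only
    have hKs : 1 - s / K = (K - s) / K := by field_simp
    rw [hKs, Real.div_rpow hs.1 hK.le, Real.div_rpow (sub_nonneg.mpr hs.2) hK.le,
      show x + y - 2 = (x - 1) + (y - 1) by ring, Real.rpow_add hK]
    have : K ^ (x - 1) ≠ 0 := by positivity
    have : K ^ (y - 1) ≠ 0 := by positivity
    field_simp
  rw [integral_congr hscale, intervalIntegral.integral_mul_const,
    integral_comp_div (fun t ↦ t ^ (x - 1) * (1 - t) ^ (y - 1)) hK.ne', zero_div,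
    div_self hK.ne', smul_eq_mul, realBeta,
    show x + y - 1 = 1 + (x + y - 2) by ring, Real.rpow_add hK, Real.rpow_one]
  ring

lemma realBeta_half_mul_rpow_eq_integral (b : ℝ) {K : ℝ} (hK : 0 < K) :
    realBeta (1 / 2) (1 - b) * K ^ ((1 : ℝ) / 2 - b)
      = ∫ s in (0 : ℝ)..K, s ^ (-(1 / 2) : ℝ) * (K - s) ^ (-b) := by
  have h := realBeta_mul_rpow_eq_integral (1 / 2) (1 - b) hK
  rwa [show (1 / 2 : ℝ) + (1 - b) - 1 = 1 / 2 - b by ring,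
    show (1 / 2 : ℝ) - 1 = -(1 / 2) by norm_num, sub_sub_cancel_left] at h

lemma intervalIntegrable_rpow_mul_rpow_sub {x y K : ℝ} (hx : 0 < x) (hy : 0 < y) (hK : 0 < K) :
    IntervalIntegrable (fun s ↦ s ^ (x - 1) * (K - s) ^ (y - 1)) volume 0 K := by
  have hleft : IntervalIntegrable (fun s ↦ s ^ (x - 1) * (K - s) ^ (y - 1)) volume 0 (K / 2) := by
    refine (intervalIntegrable_rpow' (by linarith)).mul_continuousOn
      ((continuousOn_const.sub continuousOn_id).rpow_const fun s hs ↦ Or.inl ?_)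
    rw [Set.uIcc_of_le (by positivity)] at hs
    exact (sub_pos.mpr (hs.2.trans_lt (half_lt_self hK))).ne'
  have hright :
      IntervalIntegrable (fun s ↦ s ^ (x - 1) * (K - s) ^ (y - 1)) volume (K / 2) K := by
    have hsub := ((intervalIntegrable_rpow' (r := y - 1) (by linarith)).comp_sub_left K
      (a := K / 2) (b := 0))
    rw [sub_half, sub_zero] at hsub
    refine hsub.continuousOn_mul (continuousOn_id.rpow_const fun s hs ↦ Or.inl ?_)
    rw [Set.uIcc_of_le (half_le_self hK.le)] at hs
    exact ((half_pos hK).trans_le hs.1).ne'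
  exact hleft.trans hright

lemma intervalIntegrable_rpow_neg_half_mul_rpow_neg_sub {b K a c : ℝ} (hb1 : b < 1) (ha : 0 ≤ a)
    (hac : a ≤ c) (hcK : c ≤ K) :
    IntervalIntegrable (fun s ↦ s ^ (-(1 / 2) : ℝ) * (K - s) ^ (-b)) volume a c := by
  rcases hac.eq_or_lt with rfl | hac
  · exact IntervalIntegrable.refl
  have hbeta := intervalIntegrable_rpow_mul_rpow_sub (x := 1 / 2) (y := 1 - b) (K := K)
    (by norm_num) (by linarith) (by linarith)
  rw [show (1 / 2 : ℝ) - 1 = -(1 / 2) by norm_num, sub_sub_cancel_left] at hbeta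
  refine hbeta.mono_set ?_
  rw [Set.uIcc_of_le hac.le, Set.uIcc_of_le (by linarith)]
  exact Set.Icc_subset_Icc ha hcK

lemma rpow_neg_le_integral_zero_two {b K : ℝ} (hb0 : 0 ≤ b) (hb1 : b < 1) (hK : 2 ≤ K) :
    (K - 1) ^ (-b) ≤ ∫ s in (0 : ℝ)..2, s ^ (-(1 / 2) : ℝ) * (K - s) ^ (-b) := by
  have hsqrt : 1 ≤ (2 : ℝ) ^ (1 / 2 : ℝ) := Real.one_le_rpow (by norm_num) (by norm_num)
  calc (K - 1) ^ (-b) ≤ K / (K - 1) * K ^ (-b) :=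
        rpow_neg_le_div_mul_rpow_neg (by linarith) (by linarith) hb1.le
    _ ≤ 2 * 2 ^ (1 / 2 : ℝ) * K ^ (-b) := by
        gcongr
        rw [div_le_iff₀ (by linarith)]
        nlinarith
    _ = ∫ s in (0 : ℝ)..2, s ^ (-(1 / 2) : ℝ) * K ^ (-b) := by
        rw [intervalIntegral.integral_mul_const, integral_rpow (Or.inl (by norm_num))]
        congr 1
        norm_num
        ring
    _ ≤ ∫ s in (0 : ℝ)..2, s ^ (-(1 / 2) : ℝ) * (K - s) ^ (-b) := by
        refine integral_mono_on_of_le_Ioo (by norm_num)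
          ((intervalIntegrable_rpow' (by norm_num)).mul_const _)
          (intervalIntegrable_rpow_neg_half_mul_rpow_neg_sub hb1 le_rfl (by norm_num) hK)
          fun s hs ↦ ?_
        exact mul_le_mul_of_nonneg_left
          (Real.rpow_le_rpow_of_nonpos (by linarith [hs.2]) (by linarith [hs.1]) (by linarith))
          (Real.rpow_nonneg hs.1.le _)

lemma phi_mul_rpow_neg_le_integral {b K m : ℝ} (hb0 : 0 ≤ b) (hb1 : b < 1) (hm : 1 ≤ m)
    (hmK : m + 2 ≤ K) :
    phi (1 / 2) m * (K - m - 1) ^ (-b)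
      ≤ ∫ s in (m + 1)..(m + 2), s ^ (-(1 / 2) : ℝ) * (K - s) ^ (-b) := by
  -- Only on the open interval: if `K = m + 2` and `b > 0`, the integrand at `s = K` is
  -- `0 ^ (-b) = 0`.
  calc phi (1 / 2) m * (K - m - 1) ^ (-b)
      = ∫ _ in (m + 1)..(m + 2), phi (1 / 2) m * (K - m - 1) ^ (-b) := by
        rw [intervalIntegral.integral_const, smul_eq_mul, add_sub_add_left_eq_sub]
        norm_num
    _ ≤ _ := by
        refine integral_mono_on_of_le_Ioo (by linarith) intervalIntegrable_const
          (intervalIntegrable_rpow_neg_half_mul_rpow_neg_sub hb1 (by linarith) (by linarith) hmK)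
          fun s hs ↦ ?_
        have hs0 : 0 < s := by linarith [hs.1]
        exact mul_le_mul (phi_half_le_rpow_neg_half hs0 (by linarith [hs.2]))
          (Real.rpow_le_rpow_of_nonpos (by linarith [hs.2]) (by linarith [hs.1]) (by linarith))
          (Real.rpow_nonneg (by linarith) _) (Real.rpow_nonneg hs0.le _)

lemma sum_phi_mul_rpow_neg_le_integral {b : ℝ} (hb0 : 0 ≤ b) (hb1 : b < 1) (n : ℕ) :
    ∑ i ∈ range n, phi (1 / 2) (i + 1) * ((n : ℝ) - i) ^ (-b)
      ≤ ∫ s in (2 : ℝ)..(n + 2), s ^ (-(1 / 2) : ℝ) * (n + 2 - s) ^ (-b) := by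
  have hpiece (i : ℕ) (hi : i < n) :
      phi (1 / 2) (i + 1) * ((n : ℝ) - i) ^ (-b)
        ≤ ∫ s in ((i : ℝ) + 2)..(((i + 1 : ℕ) : ℝ) + 2),
            s ^ (-(1 / 2) : ℝ) * (n + 2 - s) ^ (-b) := by
    have hin : (i : ℝ) + 1 ≤ n := by exact_mod_cast hi
    have h := phi_mul_rpow_neg_le_integral (K := n + 2) (m := i + 1) hb0 hb1 (by linarith)
      (by linarith)
    rwa [show (n : ℝ) + 2 - (i + 1) - 1 = n - i by ring, show (i : ℝ) + 1 + 1 = i + 2 by ring,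
      show (i : ℝ) + 1 + 2 = ((i + 1 : ℕ) : ℝ) + 2 by push_cast; ring] at h
  calc _ ≤ ∑ i ∈ range n,
        ∫ s in ((i : ℝ) + 2)..(((i + 1 : ℕ) : ℝ) + 2),
          s ^ (-(1 / 2) : ℝ) * (n + 2 - s) ^ (-b) :=
        sum_le_sum fun i hi ↦ hpiece i (mem_range.mp hi)
    _ = _ := by
      rw [sum_integral_adjacent_intervals fun i hi ↦
        intervalIntegrable_rpow_neg_half_mul_rpow_neg_sub hb1 (by positivity)
          (by push_cast; linarith) (by norm_cast; omega)]
      norm_num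

theorem stmt_0 (b : ℝ) (hb0 : 0 ≤ b) (hb1 : b < 1) (k : ℕ) (hk : 2 ≤ k) :
    ∑ j ∈ Finset.Icc 1 k,
        ((1 / 2) / (1 / 2 + (k : ℝ) - (j : ℝ))) ^ ((1 : ℝ) / 2) * (j : ℝ) ^ (-b)
      ≤ realBeta (1 / 2) (1 - b) * ((k : ℝ) + 1) ^ ((1 : ℝ) / 2 - b) := by
  obtain ⟨n, rfl⟩ : ∃ n, k = n + 1 := ⟨k - 1, by omega⟩
  have hn : (1 : ℝ) ≤ n := by exact_mod_cast (show 1 ≤ n by omega)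
  have hsum : ∑ j ∈ Icc 1 (n + 1),
        ((1 / 2) / (1 / 2 + ((n + 1 : ℕ) : ℝ) - j)) ^ ((1 : ℝ) / 2) * (j : ℝ) ^ (-b)
      = ((n : ℝ) + 2 - 1) ^ (-b)
          + ∑ i ∈ range n, phi (1 / 2) (i + 1) * ((n : ℝ) - i) ^ (-b) := by
    rw [sum_Icc_one_eq_sum_range_sub, sum_range_succ', add_comm]
    congr 1
    · norm_num
      ring_nf
    · refine sum_congr rfl fun i hi ↦ ?_
      rw [Nat.cast_sub (by simp at hi; omega), phi]
      push_cast
      ring_nf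
  rw [hsum, show ((n + 1 : ℕ) : ℝ) + 1 = n + 2 by push_cast; ring,
    realBeta_half_mul_rpow_eq_integral b (by positivity),
    ← integral_add_adjacent_intervals (b := 2)
      (intervalIntegrable_rpow_neg_half_mul_rpow_neg_sub hb1 le_rfl (by norm_num) (by linarith))
      (intervalIntegrable_rpow_neg_half_mul_rpow_neg_sub hb1 (by norm_num) (by linarith) le_rfl)]
  exact add_le_add (rpow_neg_le_integral_zero_two hb0 hb1 (by linarith))
    (sum_phi_mul_rpow_neg_le_integral hb0 hb1 n)
end

section
/- For real numbers b ∈ [0,1), d ∈ (0,∞) and integer k ≥ 2, the sum ∑_{j=1}^{k} (1/(1+k-j)) · j^{-(b+d)} is at most 2^b [(1-b)^{-1} + 2^{d+1}(ed)^{-1}] · (k+1)^{-b}. -/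
/-!
Split the sum at `m = ⌊(k+1)/2⌋`. For `j ≤ m` the factor `1/(1+k-j)` is at most `2/(k+1)`, and
`∑_{j ≤ m} j^{-b} ≤ m^{1-b}/(1-b)` gives the term `2^b (1-b)⁻¹ (k+1)^{-b}`.
For `j > m` the factor `j^{-(b+d)}` is at most `((k+1)/2)^{-(b+d)}`, the remaining weights
`1/(1+k-j)` sum to at most the harmonic number `H_k ≤ 2 log (k+1)`, and `log x ≤ x^d / (e d)`
absorbs the extra factor `(k+1)^{-d}`.
-/

open Finset Real

lemma rpow_add_mul_rpow_sub_one_le {x p : ℝ} (hx : 0 ≤ x) (hp0 : 0 ≤ p) (hp1 : p ≤ 1) :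
    x ^ p + p * (x + 1) ^ (p - 1) ≤ (x + 1) ^ p := by
  have hx1 : 0 < x + 1 := by linarith
  have hs : -1 ≤ -(x + 1)⁻¹ := neg_le_neg (inv_le_one_of_one_le₀ (by linarith))
  -- Bernoulli: `(x / (x + 1)) ^ p ≤ 1 - p / (x + 1)`
  have bernoulli := rpow_one_add_le_one_add_mul_self hs hp0 hp1
  rw [show 1 + -(x + 1)⁻¹ = x / (x + 1) by field_simp; ring, div_rpow hx hx1.le,
    div_le_iff₀ (rpow_pos_of_pos hx1 p)] at bernoulli
  have hpow : (x + 1) ^ (p - 1) = (x + 1) ^ p / (x + 1) := rpow_sub_one hx1.ne' p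
  rw [hpow]
  calc x ^ p + p * ((x + 1) ^ p / (x + 1))
      ≤ (1 + p * -(x + 1)⁻¹) * (x + 1) ^ p + p * ((x + 1) ^ p / (x + 1)) := by gcongr
    _ = (x + 1) ^ p := by ring

lemma sum_Icc_rpow_neg_le {b : ℝ} (hb0 : 0 ≤ b) (hb1 : b < 1) (n : ℕ) :
    ∑ j ∈ Icc 1 n, (j : ℝ) ^ (-b) ≤ (n : ℝ) ^ (1 - b) / (1 - b) := by
  have hb : 0 < 1 - b := by linarith
  induction n with
  | zero => simp [zero_rpow hb.ne']
  | succ n ih =>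
    have step := rpow_add_mul_rpow_sub_one_le (n.cast_nonneg : (0 : ℝ) ≤ n) hb.le (by linarith)
    rw [show 1 - b - 1 = -b by ring] at step
    rw [sum_Icc_succ_top (by omega), Nat.cast_succ, le_div_iff₀ hb]
    rw [le_div_iff₀ hb] at ih
    linarith

lemma sum_Icc_one_div_one_add_sub_eq_harmonic (k : ℕ) :
    ∑ j ∈ Icc 1 k, 1 / (1 + (k : ℝ) - j) = harmonic k := by
  rw [harmonic_eq_sum_Icc]
  push_cast
  refine sum_nbij' (fun j ↦ k + 1 - j) (fun j ↦ k + 1 - j) ?_ ?_ ?_ ?_ ?_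
  iterate 4 (intro j hj; simp only [mem_Icc] at hj ⊢; omega)
  intro j hj
  rw [mem_Icc] at hj
  rw [one_div, Nat.cast_sub (by omega)]
  push_cast
  ring

lemma harmonic_le_two_mul_log_add_one {k : ℕ} (hk : 2 ≤ k) :
    (harmonic k : ℝ) ≤ 2 * log (k + 1) := by
  have hk' : (2 : ℝ) ≤ k := by exact_mod_cast hk
  have one_le_log : 1 ≤ log (k + 1) := by
    rw [le_log_iff_exp_le (by linarith)]
    linarith [exp_one_lt_d9]
  have log_le : log k ≤ log (k + 1) := log_le_log (by linarith) (by linarith)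
  linarith [harmonic_le_one_add_log k]

lemma log_le_rpow_div_exp_one_mul {x d : ℝ} (hx : 0 < x) (hd : 0 < d) :
    log x ≤ x ^ d / (exp 1 * d) := by
  rw [le_div_iff₀ (by positivity), rpow_def_of_pos hx]
  calc log x * (exp 1 * d) = exp 1 * (log x * d) := by ring
    _ ≤ exp (log x * d) := exp_one_mul_le_exp

lemma div_two_rpow_neg {x : ℝ} (hx : 0 ≤ x) (p : ℝ) : (x / 2) ^ (-p) = 2 ^ p * x ^ (-p) := by
  rw [div_rpow hx zero_le_two, rpow_neg hx, rpow_neg zero_le_two]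
  field_simp

section Halves

variable {b d : ℝ} {k m : ℕ}

lemma sum_lower_half_le (hb0 : 0 ≤ b) (hb1 : b < 1) (hd : 0 ≤ d) (hm : 2 * m ≤ k + 1) :
    ∑ j ∈ Ioc 0 m, 1 / (1 + (k : ℝ) - j) * (j : ℝ) ^ (-(b + d))
      ≤ 2 ^ b * (1 - b)⁻¹ * ((k : ℝ) + 1) ^ (-b) := by
  set x : ℝ := ((k : ℝ) + 1) / 2 with hx_def
  have hx : 0 < x := by positivity
  have hmx : (m : ℝ) ≤ x := by
    rw [hx_def, le_div_iff₀ two_pos]; exact_mod_cast (by omega : m * 2 ≤ k + 1)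
  have hpow : x ^ (-b) = x ^ (1 - b) / x := by rw [← rpow_sub_one hx.ne']; ring_nf
  calc ∑ j ∈ Ioc 0 m, 1 / (1 + (k : ℝ) - j) * (j : ℝ) ^ (-(b + d))
      ≤ ∑ j ∈ Ioc 0 m, x⁻¹ * (j : ℝ) ^ (-b) := by
        refine sum_le_sum fun j hj ↦ ?_
        have hj1 : (1 : ℝ) ≤ j := by exact_mod_cast (mem_Ioc.mp hj).1
        have hjm : (j : ℝ) ≤ m := by exact_mod_cast (mem_Ioc.mp hj).2
        rw [one_div]
        gcongr <;> linarith
    _ = x⁻¹ * ∑ j ∈ Ioc 0 m, (j : ℝ) ^ (-b) := (mul_sum _ _ _).symm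
    _ ≤ x⁻¹ * (x ^ (1 - b) / (1 - b)) := by
        have hb : 0 < 1 - b := by linarith
        gcongr
        exact (sum_Icc_rpow_neg_le hb0 hb1 m).trans (by gcongr)
    _ = x ^ (-b) * (1 - b)⁻¹ := by rw [hpow]; ring
    _ = 2 ^ b * (1 - b)⁻¹ * ((k : ℝ) + 1) ^ (-b) := by
        rw [hx_def, div_two_rpow_neg (by positivity)]; ring

lemma sum_upper_half_le (hb0 : 0 ≤ b) (hd : 0 < d) (hk : 2 ≤ k) (hm : k ≤ 2 * m + 1) :
    ∑ j ∈ Ioc m k, 1 / (1 + (k : ℝ) - j) * (j : ℝ) ^ (-(b + d))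
      ≤ 2 ^ b * (2 ^ (d + 1) * (exp 1 * d)⁻¹) * ((k : ℝ) + 1) ^ (-b) := by
  set K : ℝ := (k : ℝ) + 1 with hK_def
  have hK : 0 < K := by positivity
  have weight_nonneg : ∀ j ∈ Icc 1 k, 0 ≤ 1 / (1 + (k : ℝ) - j) := fun j hj ↦ by
    have : (j : ℝ) ≤ k := by exact_mod_cast (mem_Icc.mp hj).2
    rw [one_div_nonneg]; linarith
  calc ∑ j ∈ Ioc m k, 1 / (1 + (k : ℝ) - j) * (j : ℝ) ^ (-(b + d))
      ≤ ∑ j ∈ Ioc m k, 1 / (1 + (k : ℝ) - j) * (K / 2) ^ (-(b + d)) := by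
        refine sum_le_sum fun j hj ↦ ?_
        have hmj := (mem_Ioc.mp hj).1
        have hKj : K / 2 ≤ j := by
          have : ((k + 1 : ℕ) : ℝ) ≤ (j * 2 : ℕ) := by exact_mod_cast (by omega : k + 1 ≤ j * 2)
          push_cast at this
          linarith
        exact mul_le_mul_of_nonneg_left (rpow_le_rpow_of_nonpos (by positivity) hKj (by linarith))
          (weight_nonneg j (Ioc_subset_Ioc_left (Nat.zero_le m) hj))
    _ ≤ (∑ j ∈ Icc 1 k, 1 / (1 + (k : ℝ) - j)) * (K / 2) ^ (-(b + d)) := by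
        rw [← sum_mul]
        refine mul_le_mul_of_nonneg_right ?_ (by positivity)
        exact sum_le_sum_of_subset_of_nonneg (Ioc_subset_Ioc_left (Nat.zero_le m))
          fun j hj _ ↦ weight_nonneg j hj
    _ ≤ 2 * (K ^ d / (exp 1 * d)) * (K / 2) ^ (-(b + d)) := by
        rw [sum_Icc_one_div_one_add_sub_eq_harmonic]
        gcongr
        exact (harmonic_le_two_mul_log_add_one hk).trans
          (by gcongr; exact log_le_rpow_div_exp_one_mul hK hd)
    _ = 2 ^ b * (2 ^ (d + 1) * (exp 1 * d)⁻¹) * K ^ (-b) := by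
        rw [div_two_rpow_neg hK.le, neg_add, rpow_add hK, rpow_add two_pos, rpow_add two_pos,
          rpow_one, rpow_neg hK.le d]
        field_simp

end Halves

theorem stmt_1 (b d : ℝ) (hb0 : 0 ≤ b) (hb1 : b < 1) (hd : 0 < d)
    (k : ℕ) (hk : 2 ≤ k) :
    ∑ j ∈ Finset.Icc 1 k, (1 / (1 + (k : ℝ) - (j : ℝ))) * (j : ℝ) ^ (-(b + d))
      ≤ (2 : ℝ) ^ b * ((1 - b)⁻¹ + 2 ^ (d + 1) * (Real.exp 1 * d)⁻¹) *
        ((k : ℝ) + 1) ^ (-b) := by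
  set m := (k + 1) / 2
  rw [show Icc 1 k = Ioc 0 k from Icc_add_one_left_eq_Ioc 0 k,
    ← sum_Ioc_consecutive _ (Nat.zero_le m) (by omega)]
  have lower := sum_lower_half_le hb0 hb1 hd.le (k := k) (m := m) (by omega)
  have upper := sum_upper_half_le hb0 hd hk (m := m) (by omega)
  linarith
end

section
/- Suppose A is Fréchet differentiable, S is a bounded linear operator into L², and there exists a family of bounded operators R_f with S A'(f) = R_f S A'(f†) and ‖R_f - I‖ ≤ C_R ‖f - f†‖ for all f in a ball B_d(f†). Then the Taylor remainder r(f) := A(f) - A(f†) - A'(f†)(f - f†) satisfies ‖S r(f)‖_{L²} ≤ (C_R/2) · ‖f - f†‖_{H₁} · ‖S A'(f†)(f - f†)‖_{L²} for all f ∈ B_d(f†). -/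
/-!
Along the segment `t ↦ f† + t u`, `u = f - f†`, the function `t ↦ S A(f† + t u) - t • S A'(f†) u`
has derivative `S A'(f† + t u) u - v = (R - I) v` with `v = S A'(f†) u`, by range invariance.
Its norm is at most `C_R t ‖u‖ ‖v‖`, and integrating this linear bound over `[0, 1]` gives the
factor `C_R / 2`.
-/

open Set

section TaylorRemainder

variable {E F : Type*} [NormedAddCommGroup E] [NormedSpace ℝ E]
  [NormedAddCommGroup F] [NormedSpace ℝ F]

theorem norm_sub_le_half_of_norm_deriv_le_mul {g g' : ℝ → F} {K : ℝ}
    (hg : ∀ t ∈ Icc (0 : ℝ) 1, HasDerivAt g (g' t) t)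
    (bound : ∀ t ∈ Ico (0 : ℝ) 1, ‖g' t‖ ≤ K * t) :
    ‖g 1 - g 0‖ ≤ K / 2 := by
  have hB : ∀ t : ℝ, HasDerivAt (fun s => K * s ^ 2 / 2) (K * t) t := fun t =>
    (((hasDerivAt_pow 2 t).const_mul K).div_const 2).congr_deriv (by ring)
  have key := image_norm_le_of_norm_deriv_right_le_deriv_boundary
    (f := fun t => g t - g 0) (a := 0) (b := 1)
    (fun t ht => (hg t ht).continuousAt.continuousWithinAt.sub continuousWithinAt_const)
    (fun t ht => ((hg t (Ico_subset_Icc_self ht)).sub_const (g 0)).hasDerivWithinAt)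
    (by simp) hB bound (right_mem_Icc.mpr zero_le_one)
  simpa using key

theorem norm_image_sub_sub_fderiv_le_of_segment {f : E → F} {f' : E → E →L[ℝ] F}
    {x u : E} {K : ℝ}
    (hf : ∀ t ∈ Icc (0 : ℝ) 1, HasFDerivAt f (f' (x + t • u)) (x + t • u))
    (bound : ∀ t ∈ Ico (0 : ℝ) 1, ‖f' (x + t • u) u - f' x u‖ ≤ K * t) :
    ‖f (x + u) - f x - f' x u‖ ≤ K / 2 := by
  have hg : ∀ t ∈ Icc (0 : ℝ) 1, HasDerivAt (fun s : ℝ => f (x + s • u) - s • f' x u)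
      (f' (x + t • u) u - f' x u) t := fun t ht => by
    have hline : HasDerivAt (fun s : ℝ => x + s • u) u t :=
      (((hasDerivAt_id' t).smul_const u).const_add x).congr_deriv (one_smul ℝ u)
    exact ((hf t ht).comp_hasDerivAt t hline).sub
      (((hasDerivAt_id' t).smul_const (f' x u)).congr_deriv (one_smul ℝ _))
  have key := norm_sub_le_half_of_norm_deriv_le_mul hg bound
  simp only [one_smul, zero_smul, add_zero, sub_zero] at key
  rwa [sub_sub, add_comm (f' x u), ← sub_sub] at key

end TaylorRemainder

theorem stmt_9_general {H₁ H₂ L2 : Type*}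
    [NormedAddCommGroup H₁] [InnerProductSpace ℝ H₁]
    [NormedAddCommGroup H₂] [InnerProductSpace ℝ H₂]
    [NormedAddCommGroup L2] [InnerProductSpace ℝ L2]
    (A : H₁ → H₂) (A' : H₁ → (H₁ →L[ℝ] H₂)) (fdag : H₁) (d : ℝ)
    (hdiff : ∀ f ∈ Metric.closedBall fdag d, HasFDerivAt A (A' f) f)
    (S : H₂ →L[ℝ] L2) (R : H₁ → (L2 →L[ℝ] L2)) (CR : ℝ)
    (hrange : ∀ f ∈ Metric.closedBall fdag d,
      S.comp (A' f) = (R f).comp (S.comp (A' fdag)))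
    (hR : ∀ f ∈ Metric.closedBall fdag d,
      ‖R f - ContinuousLinearMap.id ℝ L2‖ ≤ CR * ‖f - fdag‖) :
    ∀ f ∈ Metric.closedBall fdag d,
      ‖S (A f - A fdag - A' fdag (f - fdag))‖
        ≤ (CR / 2) * ‖f - fdag‖ * ‖S (A' fdag (f - fdag))‖ := by
  intro f hf
  set u := f - fdag
  set v := S (A' fdag u)
  have hseg : ∀ t ∈ Icc (0 : ℝ) 1, fdag + t • u ∈ Metric.closedBall fdag d := fun t ht =>
    (convex_closedBall fdag d).add_smul_mem (Metric.mem_closedBall_self (dist_nonneg.trans hf))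
      (by simpa [u] using hf) ht
  have hdrift : ∀ t ∈ Ico (0 : ℝ) 1,
      ‖S (A' (fdag + t • u) u) - S (A' fdag u)‖ ≤ CR * ‖u‖ * ‖v‖ * t := fun t ht => by
    have hy := hseg t (Ico_subset_Icc_self ht)
    have hSA : S (A' (fdag + t • u) u) = R (fdag + t • u) v :=
      congrArg (fun T : H₁ →L[ℝ] L2 => T u) (hrange _ hy)
    calc ‖S (A' (fdag + t • u) u) - S (A' fdag u)‖
        = ‖(R (fdag + t • u) - ContinuousLinearMap.id ℝ L2) v‖ := by simp [hSA, v]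
      _ ≤ CR * ‖fdag + t • u - fdag‖ * ‖v‖ := (ContinuousLinearMap.le_opNorm _ v).trans
          (mul_le_mul_of_nonneg_right (hR _ hy) (norm_nonneg v))
      _ = CR * ‖u‖ * ‖v‖ * t := by
          rw [add_sub_cancel_left, norm_smul, Real.norm_of_nonneg ht.1]; ring
  have key := norm_image_sub_sub_fderiv_le_of_segment (f := fun y => S (A y))
    (f' := fun y => S.comp (A' y)) (fun t ht => (S.hasFDerivAt.comp _ (hdiff _ (hseg t ht))))
    hdrift
  simp only [ContinuousLinearMap.comp_apply, add_sub_cancel, u] at key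
  rw [map_sub, map_sub]
  linarith

theorem stmt_9 {H₁ H₂ L2 : Type*}
    [NormedAddCommGroup H₁] [InnerProductSpace ℝ H₁] [CompleteSpace H₁]
    [NormedAddCommGroup H₂] [InnerProductSpace ℝ H₂] [CompleteSpace H₂]
    [NormedAddCommGroup L2] [InnerProductSpace ℝ L2] [CompleteSpace L2]
    (A : H₁ → H₂) (A' : H₁ → (H₁ →L[ℝ] H₂)) (fdag : H₁) (d : ℝ) (hd : 0 < d)
    (hdiff : ∀ f ∈ Metric.closedBall fdag d, HasFDerivAt A (A' f) f)
    (S : H₂ →L[ℝ] L2) (R : H₁ → (L2 →L[ℝ] L2)) (CR : ℝ) (hCR : 0 < CR)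
    (hrange : ∀ f ∈ Metric.closedBall fdag d,
      S.comp (A' f) = (R f).comp (S.comp (A' fdag)))
    (hR : ∀ f ∈ Metric.closedBall fdag d,
      ‖R f - ContinuousLinearMap.id ℝ L2‖ ≤ CR * ‖f - fdag‖) :
    ∀ f ∈ Metric.closedBall fdag d,
      ‖S (A f - A fdag - A' fdag (f - fdag))‖
        ≤ (CR / 2) * ‖f - fdag‖ * ‖S (A' fdag (f - fdag))‖ :=
  stmt_9_general A A' fdag d hdiff S R CR hrange hR
end

section
/- Let L be a positive self-adjoint trace-class operator on a separable Hilbert space with eigenvalues σ_j satisfying σ_j ≤ c j^{-1/ν} for some c > 0 and 0 < ν < 1. Then the effective dimension N(λ) := Tr((L + λI)^{-1} L) = ∑_j σ_j/(σ_j + λ) satisfies N(λ) ≤ C λ^{-ν} for all λ ∈ (0,1], for some constant C depending only on c and ν. -/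
/-!
Each term `σ j / (σ j + λ)` is at most `1` and at most `σ j / λ ≤ (c / λ) (j + 1) ^ (-1/ν)`.
Using the first bound for `j < N` and the second for `j ≥ N`, comparison of the tail with
`∫_N^∞ x ^ (-1/ν) dx` gives `N + (c / λ) N ^ (1 - 1/ν) / (1/ν - 1)`; the two terms balance at
`N ≈ λ ^ (-ν)`, where both are of order `λ ^ (-ν)`.
-/

open Real

theorem summable_nat_add_one_rpow_neg {p : ℝ} (hp : 1 < p) :
    Summable fun j : ℕ => ((j : ℝ) + 1) ^ (-p) := by
  have := (summable_nat_add_iff 1).2 (summable_nat_rpow.2 (neg_lt_neg hp))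
  simpa only [Nat.cast_add, Nat.cast_one] using this

theorem tsum_nat_add_one_rpow_neg_le {p : ℝ} (hp : 1 < p) {N : ℕ} (hN : 0 < N) :
    ∑' j : ℕ, (((j + N : ℕ) : ℝ) + 1) ^ (-p) ≤ (N : ℝ) ^ (1 - p) / (p - 1) := by
  have hN' : (0 : ℝ) < N := by exact_mod_cast hN
  refine Real.tsum_le_of_sum_range_le (fun j => by positivity) fun m => ?_
  have hanti : AntitoneOn (fun x : ℝ => x ^ (-p)) (Set.Icc (N : ℝ) (N + m)) :=
    fun x hx y _ hxy => rpow_le_rpow_of_nonpos (hN'.trans_le hx.1) hxy (by linarith)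
  have hzero : (0 : ℝ) ∉ Set.uIcc (N : ℝ) (N + m) := by
    rw [Set.uIcc_of_le (le_add_of_nonneg_right m.cast_nonneg)]
    exact fun h => hN'.not_ge h.1
  calc ∑ j ∈ Finset.range m, (((j + N : ℕ) : ℝ) + 1) ^ (-p)
      = ∑ j ∈ Finset.range m, ((N : ℝ) + ((j + 1 : ℕ) : ℝ)) ^ (-p) := by
        refine Finset.sum_congr rfl fun j _ => ?_
        push_cast; ring_nf
    _ ≤ ∫ x in (N : ℝ)..N + m, x ^ (-p) := hanti.sum_le_integral
    _ = ((N : ℝ) ^ (1 - p) - (N + m : ℝ) ^ (1 - p)) / (p - 1) := by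
        rw [integral_rpow (Or.inr ⟨by linarith, hzero⟩), show -p + 1 = 1 - p by ring,
          ← neg_sub p 1, div_neg, ← neg_div, neg_sub]
    _ ≤ (N : ℝ) ^ (1 - p) / (p - 1) :=
        div_le_div_of_nonneg_right (sub_le_self _ (by positivity)) (by linarith)

theorem tsum_le_of_le_one_of_le_rpow {t : ℕ → ℝ} {A p : ℝ} (hp : 1 < p)
    (ht0 : ∀ j, 0 ≤ t j) (ht1 : ∀ j, t j ≤ 1) (htA : ∀ j, t j ≤ A * ((j : ℝ) + 1) ^ (-p))
    {N : ℕ} (hN : 0 < N) :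
    ∑' j, t j ≤ N + A * ((N : ℝ) ^ (1 - p) / (p - 1)) := by
  have hA : 0 ≤ A := by simpa using (ht0 0).trans (htA 0)
  have ht : Summable t :=
    (summable_nat_add_one_rpow_neg hp).mul_left A |>.of_nonneg_of_le ht0 htA
  have hhead : ∑ j ∈ Finset.range N, t j ≤ N := by
    simpa using Finset.sum_le_sum fun j (_ : j ∈ Finset.range N) => ht1 j
  have htail : ∑' j, t (j + N) ≤ A * ((N : ℝ) ^ (1 - p) / (p - 1)) := calc
    ∑' j, t (j + N) ≤ ∑' j, A * (((j + N : ℕ) : ℝ) + 1) ^ (-p) :=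
      Summable.tsum_le_tsum (fun j => htA (j + N)) ((summable_nat_add_iff N).2 ht)
        (((summable_nat_add_iff N).2 (summable_nat_add_one_rpow_neg hp)).mul_left A)
    _ = A * ∑' j, (((j + N : ℕ) : ℝ) + 1) ^ (-p) := tsum_mul_left
    _ ≤ A * ((N : ℝ) ^ (1 - p) / (p - 1)) := by
      gcongr; exact tsum_nat_add_one_rpow_neg_le hp hN
  rw [← ht.sum_add_tsum_nat_add N]
  exact add_le_add hhead htail

theorem tsum_div_add_le_of_le_rpow {σ : ℕ → ℝ} {c p lam : ℝ} (hp : 1 < p)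
    (hσ0 : ∀ j, 0 ≤ σ j) (hσ : ∀ j, σ j ≤ c * ((j : ℝ) + 1) ^ (-p)) (hlam : 0 < lam)
    {N : ℕ} (hN : 0 < N) :
    ∑' j, σ j / (σ j + lam) ≤ N + c / lam * ((N : ℝ) ^ (1 - p) / (p - 1)) := by
  have hpos : ∀ j, 0 < σ j + lam := fun j => add_pos_of_nonneg_of_pos (hσ0 j) hlam
  refine tsum_le_of_le_one_of_le_rpow hp (fun j => div_nonneg (hσ0 j) (hpos j).le)
    (fun j => div_le_one_of_le₀ (le_add_of_nonneg_right hlam.le) (hpos j).le) (fun j => ?_) hN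
  calc σ j / (σ j + lam) ≤ σ j / lam :=
        div_le_div_of_nonneg_left (hσ0 j) hlam (le_add_of_nonneg_left (hσ0 j))
    _ ≤ c / lam * ((j : ℝ) + 1) ^ (-p) := by
        rw [div_mul_eq_mul_div]; gcongr; exact hσ j

theorem stmt_11 (c ν : ℝ) (hc : 0 < c) (hν0 : 0 < ν) (hν1 : ν < 1) :
    ∃ C > 0, ∀ σ : ℕ → ℝ,
      (∀ j, 0 ≤ σ j) →
      (Antitone σ) →
      (∀ j : ℕ, σ j ≤ c * ((j : ℝ) + 1) ^ (-(1 / ν))) →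
      ∀ lam : ℝ, 0 < lam → lam ≤ 1 →
        ∑' j : ℕ, σ j / (σ j + lam) ≤ C * lam ^ (-ν) := by
  refine ⟨2 + c * ν / (1 - ν), by have := div_pos (mul_pos hc hν0) (sub_pos.2 hν1); linarith, ?_⟩
  intro σ hσ0 _ hσ lam hlam hlam1
  have hp : 1 < 1 / ν := one_lt_one_div hν0 hν1
  set N := ⌈lam ^ (-ν)⌉₊
  have hlamν : 1 ≤ lam ^ (-ν) := one_le_rpow_of_pos_of_le_one_of_nonpos hlam hlam1 (by linarith)
  have hN : 0 < N := Nat.one_le_ceil_iff.2 (by linarith)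
  have hN2 : (N : ℝ) ≤ 2 * lam ^ (-ν) := by
    linarith [Nat.ceil_lt_add_one (zero_le_one.trans hlamν)]
  have hNpow : (N : ℝ) ^ (1 - 1 / ν) ≤ lam ^ (-ν) * lam := calc
    (N : ℝ) ^ (1 - 1 / ν) ≤ (lam ^ (-ν)) ^ (1 - 1 / ν) :=
        rpow_le_rpow_of_nonpos (by positivity) (Nat.le_ceil _) (by linarith)
    _ = lam ^ (-ν) * lam := by
        rw [← rpow_mul hlam.le, ← rpow_add_one hlam.ne']
        congr 1; field_simp; ring
  calc ∑' j, σ j / (σ j + lam)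
      ≤ N + c / lam * ((N : ℝ) ^ (1 - 1 / ν) / (1 / ν - 1)) :=
        tsum_div_add_le_of_le_rpow hp hσ0 hσ hlam hN
    _ ≤ 2 * lam ^ (-ν) + c / lam * (lam ^ (-ν) * lam / (1 / ν - 1)) := by
        gcongr
    _ = (2 + c * ν / (1 - ν)) * lam ^ (-ν) := by
        have : 1 - ν ≠ 0 := by linarith
        field_simp
end
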